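/- For every real r, define the sequence (u_n(r)) by u_0(r) = 1, u_1(r) = r, and u_{n+1}(r) = r·u_n(r) − u_{n−1}(r) (so u_n(r) is a Chebyshev polynomial of the second kind evaluated at the half-argument, u_n(2cos θ) = sin((n+1)θ)/sin θ). Then for all real p, q, r with p, q, r > 0 and r < 2, there exists a positive integer n such that u_{n+1}(r)·q − u_n(r)·p < 0. -/

import Mathlib

/-!
With `r = 2 cos θ` and `0 < θ < π / 2`, `u_n(r) = U_n(cos θ)` is the Chebyshev polynomial of the
second kind, so `u_n(r) sin θ = sin ((n + 1) θ)`. Taking `k = ⌊π / θ⌋ ≥ 2`, `sin (k θ) ≥ 0` while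
`π < (k + 1) θ < 2π` makes `sin ((k + 1) θ) < 0`; hence `n = k - 1 ≥ 1` has `u_n(r) ≥ 0` and
`u_{n+1}(r) < 0`.
-/

noncomputable section

/-- Chebyshev-type sequence: `u 0 = 1`, `u 1 = r`, `u (n+2) = r * u (n+1) - u n`. -/
def cheb (r : ℝ) : ℕ → ℝ
  | 0 => 1
  | 1 => r
  | n + 2 => r * cheb r (n + 1) - cheb r n

open Real Polynomial Polynomial.Chebyshev

theorem cheb_eq_eval_U (r : ℝ) (n : ℕ) : cheb r n = (U ℝ n).eval (r / 2) := by
  induction n using Nat.twoStepInduction with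
  | zero => simp [cheb]
  | one => simp only [cheb, Nat.cast_one, U_one, eval_mul, eval_ofNat, eval_X]; ring
  | more n ih0 ih1 =>
    rw [cheb, ih0, ih1]
    push_cast
    rw [U_add_two]
    simp only [eval_sub, eval_mul, eval_ofNat, eval_X]
    ring

theorem cheb_two_mul_cos_mul_sin (θ : ℝ) (n : ℕ) :
    cheb (2 * cos θ) n * sin θ = sin ((n + 1) * θ) := by
  rw [cheb_eq_eval_U, mul_div_cancel_left₀ _ two_ne_zero]
  exact_mod_cast U_real_cos θ n

theorem exists_pos_sin_nonneg_sin_succ_neg {θ : ℝ} (hθ₀ : 0 < θ) (hθ : θ < π / 2) :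
    ∃ n : ℕ, 0 < n ∧ 0 ≤ sin ((n + 1) * θ) ∧ sin ((n + 2) * θ) < 0 := by
  obtain ⟨k, hk_le, hk_lt⟩ : ∃ k : ℕ, (k : ℝ) * θ ≤ π ∧ π < (k + 1) * θ := by
    refine ⟨⌊π / θ⌋₊, ?_, ?_⟩
    · exact (le_div_iff₀ hθ₀).1 (Nat.floor_le (div_pos pi_pos hθ₀).le)
    · exact (div_lt_iff₀ hθ₀).1 (Nat.lt_floor_add_one _)
  have hk2 : 2 ≤ k := by
    by_contra! h
    have : (k : ℝ) + 1 ≤ 2 := by exact_mod_cast h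
    nlinarith
  refine ⟨k - 1, by omega, ?_, ?_⟩
  · have : ((k - 1 : ℕ) : ℝ) + 1 = k := by rw [Nat.cast_sub (by omega)]; push_cast; ring
    rw [this]
    exact sin_nonneg_of_nonneg_of_le_pi (by positivity) hk_le
  · have : ((k - 1 : ℕ) : ℝ) + 2 = k + 1 := by rw [Nat.cast_sub (by omega)]; push_cast; ring
    rw [this, ← sin_sub_two_pi]
    apply sin_neg_of_neg_of_neg_pi_lt <;> linarith

/-- for `p, q, r > 0` with `r < 2` there is a positive integer `n`
with `u_{n+1}(r) q - u_n(r) p < 0`. -/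
theorem exists_cheb_combination_neg (p q r : ℝ)
    (hp : 0 < p) (hq : 0 < q) (hr : 0 < r) (hr2 : r < 2) :
    ∃ n : ℕ, 0 < n ∧ cheb r (n + 1) * q - cheb r n * p < 0 := by
  set θ := arccos (r / 2)
  have hr_eq : r = 2 * cos θ := by rw [cos_arccos] <;> linarith
  have hθ₀ : 0 < θ := arccos_pos.2 (by linarith)
  have hθ : θ < π / 2 := arccos_lt_pi_div_two.2 (by linarith)
  have hsin : 0 < sin θ := sin_pos_of_pos_of_lt_pi hθ₀ (by linarith [pi_pos])
  obtain ⟨n, hn, hsin_n, hsin_succ⟩ := exists_pos_sin_nonneg_sin_succ_neg hθ₀ hθ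
  have h_n : 0 ≤ cheb r n := by
    refine nonneg_of_mul_nonneg_left ?_ hsin
    rwa [hr_eq, cheb_two_mul_cos_mul_sin]
  have h_succ : cheb r (n + 1) < 0 := by
    refine neg_of_mul_neg_left ?_ hsin.le
    rw [hr_eq, cheb_two_mul_cos_mul_sin]
    push_cast
    rwa [add_assoc, one_add_one_eq_two]
  exact ⟨n, hn, by linarith [mul_neg_of_neg_of_pos h_succ hq, mul_nonneg h_n hp.le]⟩
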